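/- For every s > 0 there exists c > 0 such that for every positive integer n and every z ∈ ℂ with |z| ≤ 1 + s/√n, the Ginibre correlation kernel satisfies K_n(z,z) ≥ c·n. -/

import Mathlib

/-!
On the diagonal, `K_n(z,z) = n e^{-x} s_n(x)` with `x = n|z|²`, and `e^{-x} s_n(x)`, the probability
that a Poisson variable of mean `x` is less than `n`, decreases in `x`. So it suffices to bound it
from below at `L = (√n + s)²`. With `m = ⌊√n⌋` and `q = n - m`, the `m` terms `L^k / k!` with
`q ≤ k < n` are each at least `L^q / q!`, because `k < n ≤ L`. Stirling's bound
`q! ≤ e √q (q/e)^q` and `log (1 + t) ≥ t - t²` give `e^{-L} L^q / q! ≥ e^{-(L-q)²/q} / (e √q)`.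
As `L - q = O(√n)` and `q ≥ n/2`, the exponent is bounded, while `m / √q ≥ 1/2`.
-/

open Finset Real
open scoped Nat

/-- The Ginibre correlation kernel
`K_n(z,w) = n s_n(n z w̄) e^{−n(|z|²+|w|²)/2}` with `s_n(ζ) = Σ_{k<n} ζ^k/k!`. -/
noncomputable def ginibreKernel (n : ℕ) (z w : ℂ) : ℂ :=
  (n : ℂ) * (∑ k ∈ Finset.range n, ((n : ℂ) * z * (starRingEnd ℂ) w) ^ k / (k.factorial : ℂ)) *
    Complex.exp (-(n : ℂ) * ((‖z‖ : ℂ) ^ 2 + (‖w‖ : ℂ) ^ 2) / 2)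

noncomputable def expPartialSum (n : ℕ) (x : ℝ) : ℝ := ∑ k ∈ range n, x ^ k / k !

lemma expPartialSum_succ (n : ℕ) (x : ℝ) :
    expPartialSum (n + 1) x = expPartialSum n x + x ^ n / n ! :=
  sum_range_succ _ _

lemma hasDerivAt_expPartialSum_succ (n : ℕ) (x : ℝ) :
    HasDerivAt (expPartialSum (n + 1)) (expPartialSum n x) x := by
  induction n with
  | zero =>
    rw [show expPartialSum 1 = fun _ => 1 by ext; simp [expPartialSum]]
    simpa [expPartialSum] using hasDerivAt_const x (1 : ℝ)
  | succ n ih =>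
    have hpow : HasDerivAt (fun y : ℝ => y ^ (n + 1) / (n + 1)!) (x ^ n / n !) x := by
      refine ((hasDerivAt_pow (n + 1) x).div_const ((n + 1)! : ℝ)).congr_deriv ?_
      rw [Nat.factorial_succ, Nat.add_sub_cancel]
      push_cast
      field_simp
    rw [funext (expPartialSum_succ (n + 1)), expPartialSum_succ]
    exact ih.add hpow

lemma hasDerivAt_exp_neg_mul_expPartialSum_succ (n : ℕ) (x : ℝ) :
    HasDerivAt (fun y => exp (-y) * expPartialSum (n + 1) y) (-(exp (-x) * (x ^ n / n !))) x := by
  refine ((hasDerivAt_neg x).exp.mul (hasDerivAt_expPartialSum_succ n x)).congr_deriv ?_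
  rw [expPartialSum_succ]
  ring

lemma antitoneOn_exp_neg_mul_expPartialSum (n : ℕ) :
    AntitoneOn (fun x => exp (-x) * expPartialSum n x) (Set.Ici 0) := by
  cases n with
  | zero => simp [expPartialSum, antitoneOn_const]
  | succ n =>
    have hderiv := hasDerivAt_exp_neg_mul_expPartialSum_succ n
    refine antitoneOn_of_hasDerivWithinAt_nonpos (convex_Ici 0)
      (fun x _ => (hderiv x).continuousAt.continuousWithinAt)
      (fun x _ => (hderiv x).hasDerivWithinAt) fun x hx => ?_
    rw [interior_Ici] at hx
    have : 0 ≤ exp (-x) * (x ^ n / n !) := by have := hx.out.le; positivity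
    linarith

lemma ginibreKernel_self_re (n : ℕ) (z : ℂ) :
    (ginibreKernel n z z).re = n * (exp (-(n * ‖z‖ ^ 2)) * expPartialSum n (n * ‖z‖ ^ 2)) := by
  have hζ : (n : ℂ) * z * starRingEnd ℂ z = ((n * ‖z‖ ^ 2 : ℝ) : ℂ) := by
    rw [mul_assoc, Complex.mul_conj, Complex.normSq_eq_norm_sq]
    push_cast
    ring
  have hexp : -(n : ℂ) * ((‖z‖ : ℂ) ^ 2 + (‖z‖ : ℂ) ^ 2) / 2 = ((-(n * ‖z‖ ^ 2) : ℝ) : ℂ) := by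
    push_cast
    ring
  rw [ginibreKernel, hζ, hexp, ← Complex.ofReal_exp, expPartialSum]
  norm_cast
  ring_nf

lemma pow_div_factorial_le_of_le {x : ℝ} {q k : ℕ} (hx : 0 ≤ x) (hqk : q ≤ k)
    (hkx : (k : ℝ) ≤ x) :
    x ^ q / q ! ≤ x ^ k / k ! := by
  induction k, hqk using Nat.le_induction with
  | base => rfl
  | succ k _ ih =>
    have hk1 : (0 : ℝ) < k + 1 := by positivity
    have hkx' : (k + 1 : ℝ) ≤ x := by exact_mod_cast hkx
    calc x ^ q / q ! ≤ x ^ k / k ! := ih (by linarith)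
      _ ≤ x ^ k / k ! * (x / (k + 1)) := by
        apply le_mul_of_one_le_right (by positivity) ((one_le_div hk1).2 hkx')
      _ = x ^ (k + 1) / (k + 1)! := by
        push_cast [Nat.factorial_succ]
        field_simp
        ring

lemma card_mul_pow_div_factorial_le_expPartialSum {x : ℝ} {q n : ℕ} (hx : 0 ≤ x)
    (hnx : (n : ℝ) ≤ x + 1) : (n - q : ℕ) * (x ^ q / q !) ≤ expPartialSum n x := by
  calc (n - q : ℕ) * (x ^ q / q !) = (Ico q n).card • (x ^ q / q !) := by
        rw [Nat.card_Ico, nsmul_eq_mul]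
    _ ≤ ∑ k ∈ Ico q n, x ^ k / k ! := by
        refine card_nsmul_le_sum _ _ _ fun k hk =>
          pow_div_factorial_le_of_le hx (mem_Ico.1 hk).1 ?_
        have : (k + 1 : ℝ) ≤ n := by exact_mod_cast (mem_Ico.1 hk).2
        linarith
    _ ≤ expPartialSum n x :=
        sum_le_sum_of_subset_of_nonneg (by rw [range_eq_Ico]; exact Ico_subset_Ico_left q.zero_le)
          fun k _ _ => by positivity

lemma factorial_le_exp_one_mul_sqrt_mul_pow {q : ℕ} (hq : q ≠ 0) :
    (q ! : ℝ) ≤ exp 1 * √q * (q / exp 1) ^ q := by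
  obtain ⟨p, rfl⟩ := Nat.exists_eq_add_one_of_ne_zero hq
  have h : Stirling.stirlingSeq (p + 1) ≤ Stirling.stirlingSeq 1 :=
    Stirling.stirlingSeq'_antitone (Nat.zero_le p)
  rw [Stirling.stirlingSeq_one, Stirling.stirlingSeq,
    div_le_div_iff₀ (by positivity) (by positivity), sqrt_mul zero_le_two] at h
  have : (0 : ℝ) < √2 := by positivity
  nlinarith

lemma exp_sub_sq_div_le_one_add_div_pow {D : ℝ} (hD : 0 ≤ D) {q : ℕ} (hq : q ≠ 0) :
    exp (D - D ^ 2 / q) ≤ (1 + D / q) ^ q := by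
  have hq0 : (0 : ℝ) < q := by positivity
  have hlog : D / q - (D / q) ^ 2 ≤ log (1 + D / q) := by
    have h := one_sub_inv_le_log_of_pos (by positivity : 0 < 1 + D / q)
    have : D / q - (D / q) ^ 2 ≤ 1 - (1 + D / q)⁻¹ := by
      rw [← one_div, one_sub_div (by positivity : (1 + D / q) ≠ 0), add_sub_cancel_left,
        le_div_iff₀ (by positivity)]
      nlinarith [pow_nonneg (div_nonneg hD hq0.le) 3]
    linarith
  calc exp (D - D ^ 2 / q) = exp (q * (D / q - (D / q) ^ 2)) := by congr 1; field_simp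
    _ ≤ exp (q * log (1 + D / q)) := by gcongr
    _ = (1 + D / q) ^ q := by rw [← log_pow, exp_log (by positivity)]

lemma exp_neg_sq_div_le_exp_neg_mul_pow_div_factorial {L : ℝ} {q : ℕ} (hq : q ≠ 0)
    (hqL : (q : ℝ) ≤ L) : exp (-((L - q) ^ 2 / q)) / (exp 1 * √q) ≤ exp (-L) * (L ^ q / q !) := by
  set D := L - q with hD
  have hq0 : (0 : ℝ) < q := by positivity
  have hpow : (1 + D / q) ^ q * (q / exp 1) ^ q = exp (-q) * L ^ q := by
    rw [← mul_pow, exp_neg, ← exp_one_pow, ← inv_pow, ← mul_pow]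
    congr 1
    field_simp
    ring
  calc exp (-(D ^ 2 / q)) / (exp 1 * √q)
      = exp (-D) * exp (D - D ^ 2 / q) * (q / exp 1) ^ q / (exp 1 * √q * (q / exp 1) ^ q) := by
        rw [← exp_add]
        field_simp
        ring_nf
    _ ≤ exp (-D) * (1 + D / q) ^ q * (q / exp 1) ^ q / q ! := by
        gcongr
        · exact exp_sub_sq_div_le_one_add_div_pow (by linarith) hq
        · exact factorial_le_exp_one_mul_sqrt_mul_pow hq
    _ = exp (-L) * (L ^ q / q !) := by
        rw [mul_assoc (exp (-D)), hpow, ← mul_assoc, ← exp_add, hD]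
        ring_nf

lemma sqrt_add_sq_sub_sq_div_le {s : ℝ} (hs : 0 ≤ s) {n q : ℕ} (hq : q ≠ 0) (hqn : q ≤ n)
    (hnq : n ≤ 2 * q) (hnq_sqrt : (n : ℝ) - √n ≤ q) :
    ((√n + s) ^ 2 - q) ^ 2 / q ≤ 4 * (2 * s + 1) ^ 2 + 2 * s ^ 4 := by
  have hq0 : (0 : ℝ) < q := by positivity
  have hnq' : (n : ℝ) ≤ 2 * q := by exact_mod_cast hnq
  have hqn' : (q : ℝ) ≤ n := by exact_mod_cast hqn
  have hsq : √n ^ 2 = n := sq_sqrt n.cast_nonneg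
  have hgap_nonneg : 0 ≤ (√n + s) ^ 2 - q := by nlinarith [sqrt_nonneg n]
  have hgap_le : (√n + s) ^ 2 - q ≤ (2 * s + 1) * √n + s ^ 2 := by nlinarith
  have : ((√n + s) ^ 2 - q) ^ 2 ≤ 2 * (2 * s + 1) ^ 2 * n + 2 * s ^ 4 := by
    nlinarith [sq_nonneg ((2 * s + 1) * √n - s ^ 2)]
  rw [div_le_iff₀ hq0]
  have : (1 : ℝ) ≤ q := by exact_mod_cast Nat.one_le_iff_ne_zero.2 hq
  nlinarith [sq_nonneg (2 * s + 1), pow_nonneg hs 4]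

lemma le_exp_neg_mul_expPartialSum_sqrt_add_sq {s : ℝ} (hs : 0 ≤ s) {n : ℕ} (hn : 2 ≤ n) :
    exp (-(4 * (2 * s + 1) ^ 2 + 2 * s ^ 4)) / (2 * exp 1) ≤
      exp (-(√n + s) ^ 2) * expPartialSum n ((√n + s) ^ 2) := by
  set m := Nat.sqrt n
  set q := n - m
  set L := (√n + s) ^ 2
  have hm : 1 ≤ m := Nat.le_sqrt.2 (by omega)
  have hmn : 2 * m ≤ n := by nlinarith [Nat.sqrt_le n]
  have hq : q ≠ 0 := by omega
  have hnL : (n : ℝ) ≤ L := by nlinarith [sqrt_nonneg n, sq_sqrt n.cast_nonneg]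
  have hqL : (q : ℝ) ≤ L := le_trans (by exact_mod_cast n.sub_le m) hnL
  have hq_eq : (q : ℝ) = n - m := Nat.cast_sub (Nat.sqrt_le_self n)
  have hm_sqrt : (m : ℝ) ≤ √n := Real.nat_sqrt_le_real_sqrt
  have hexp : exp (-(4 * (2 * s + 1) ^ 2 + 2 * s ^ 4)) ≤ exp (-((L - q) ^ 2 / q)) := by
    gcongr
    exact sqrt_add_sq_sub_sq_div_le hs hq (n.sub_le m) (by omega) (by linarith)
  have hsqrt : √q ≤ 2 * m := by
    have : √n < m + 1 := Real.real_sqrt_lt_nat_sqrt_succ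
    have : (1 : ℝ) ≤ m := by exact_mod_cast hm
    have : √q ≤ √n := sqrt_le_sqrt (by exact_mod_cast n.sub_le m)
    linarith
  calc exp (-(4 * (2 * s + 1) ^ 2 + 2 * s ^ 4)) / (2 * exp 1)
      = exp (-(4 * (2 * s + 1) ^ 2 + 2 * s ^ 4)) * m / (exp 1 * (2 * m)) := by
        field_simp
    _ ≤ exp (-((L - q) ^ 2 / q)) * m / (exp 1 * √q) := by
        have : 0 < √q := sqrt_pos.2 (by positivity)
        gcongr
    _ = m * (exp (-((L - q) ^ 2 / q)) / (exp 1 * √q)) := by ring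
    _ ≤ m * (exp (-L) * (L ^ q / q !)) := by
        gcongr
        exact exp_neg_sq_div_le_exp_neg_mul_pow_div_factorial hq hqL
    _ = exp (-L) * ((n - q : ℕ) * (L ^ q / q !)) := by
        rw [Nat.sub_sub_self (by omega)]
        ring
    _ ≤ exp (-L) * expPartialSum n L := by
        gcongr
        exact card_mul_pow_div_factorial_le_expPartialSum (by positivity) (by linarith)

lemma exists_pos_le_exp_neg_mul_expPartialSum_sqrt_add_sq {s : ℝ} (hs : 0 ≤ s) :
    ∃ c > 0, ∀ n : ℕ, 1 ≤ n → c ≤ exp (-(√n + s) ^ 2) * expPartialSum n ((√n + s) ^ 2) := by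
  refine ⟨min (exp (-(4 * (2 * s + 1) ^ 2 + 2 * s ^ 4)) / (2 * exp 1)) (exp (-(1 + s) ^ 2)),
    by positivity, fun n hn => ?_⟩
  rcases hn.eq_or_lt with rfl | hn
  · simp [expPartialSum]
  · exact (min_le_left _ _).trans (le_exp_neg_mul_expPartialSum_sqrt_add_sq hs hn)

/-- For every `s > 0` there is `c > 0` such that `K_n(z,z) ≥ c n` for all `n ≥ 1` and
all `z` with `|z| ≤ 1 + s/√n`. (Note `K_n(z,z)` is real and positive.) -/
theorem ginibreKernel_diagonal_lower_bound (s : ℝ) (hs : 0 < s) :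
    ∃ c : ℝ, 0 < c ∧ ∀ n : ℕ, 1 ≤ n → ∀ z : ℂ, ‖z‖ ≤ 1 + s / Real.sqrt n →
      c * n ≤ (ginibreKernel n z z).re := by
  obtain ⟨c, hc, hbound⟩ := exists_pos_le_exp_neg_mul_expPartialSum_sqrt_add_sq hs.le
  refine ⟨c, hc, fun n hn z hz => ?_⟩
  have hsqrt : 0 < √n := sqrt_pos.2 (by exact_mod_cast hn)
  have hx : n * ‖z‖ ^ 2 ≤ (√n + s) ^ 2 := by
    have : √n * ‖z‖ ≤ √n + s := by
      calc √n * ‖z‖ ≤ √n * (1 + s / √n) := by gcongr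
        _ = √n + s := by field_simp
    calc n * ‖z‖ ^ 2 = (√n * ‖z‖) ^ 2 := by rw [mul_pow, sq_sqrt n.cast_nonneg]
      _ ≤ (√n + s) ^ 2 := by gcongr
  rw [ginibreKernel_self_re, mul_comm c]
  gcongr
  exact (hbound n hn).trans
    (antitoneOn_exp_neg_mul_expPartialSum n (Set.mem_Ici.2 (by positivity))
      (Set.mem_Ici.2 (by positivity)) hx)
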